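/- arXiv:2408.00217 — 4 statements merged into one kernel-verified Lean document; each statement's English description precedes it below -/
import Mathlib

section
/- For the age Markov chain with return time X to state 0, E[X²] = 1 + Σ_{i=0}^{m-2} Π_{j=0}^{i}(1-p_j) + 2 Σ_{i=0}^{m-1} E_{i+1} Π_{j=0}^{i}(1-p_j) + ((2-p_m)/p_m²) Π_{i=0}^{m-1}(1-p_i), where E_i is the expected hitting time of state 0 from state i. -/
lemma second_moment_aux (p E X2 : ℕ → ℝ) :
    ∀ m : ℕ, 1 ≤ m →
    (∀ i, i < m → X2 i = 1 + (1 - p i) * (2 * E (i + 1) + X2 (i + 1))) →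
    X2 0 = 1 + (∑ i ∈ Finset.range (m - 1), ∏ j ∈ Finset.range (i + 1), (1 - p j))
      + 2 * (∑ i ∈ Finset.range m, E (i + 1) * ∏ j ∈ Finset.range (i + 1), (1 - p j))
      + X2 m * ∏ i ∈ Finset.range m, (1 - p i) := by
  intro m hm
  induction m, hm using Nat.le_induction with
  | base =>
    intro h
    have h0 := h 0 (by omega)
    simp [Finset.sum_range_succ, Finset.prod_range_succ, h0]
    ring
  | succ n hn ih =>
    intro h
    have h0 := ih (fun i hi => h i (by omega))
    have hnrec := h n (by omega)
    rw [h0, hnrec]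
    have e1 : n + 1 - 1 = n := rfl
    rw [e1]
    have e2 : n = (n - 1) + 1 := by omega
    rw [show (Finset.range n) = Finset.range ((n-1)+1) from by rw [← e2]]
    rw [Finset.sum_range_succ (fun i => ∏ j ∈ Finset.range (i + 1), (1 - p j)) (n-1)]
    rw [Finset.sum_range_succ (fun i => E (i + 1) * ∏ j ∈ Finset.range (i + 1), (1 - p j)) n,
        Finset.prod_range_succ (fun i => (1 - p i)) n]
    rw [show (n - 1) + 1 = n from by omega]
    ring

/-- For the age Markov chain on `{0,...,m}` with return time `X` to state 0:
given the mean hitting times `E i` (with `E m = 1/p m`) and the second moments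
`X2 i` of the hitting times of 0 (satisfying
`X2 i = 1 + (1-p i)(2 E (i+1) + X2 (i+1))` and `X2 m = (2-p m)/p m²`), we have
`E[X²] = X2 0 = 1 + Σ_{i=0}^{m-2} Π_{j=0}^{i}(1-p j)
 + 2 Σ_{i=0}^{m-1} E (i+1) Π_{j=0}^{i}(1-p j) + ((2-p m)/p m²) Π_{i=0}^{m-1}(1-p i)`. -/
theorem second_moment_return_time (m : ℕ) (hm : 1 ≤ m) (p E X2 : ℕ → ℝ)
    (hp : ∀ j, j ≤ m → 0 ≤ p j ∧ p j ≤ 1) (hpm : 0 < p m)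
    (hEm : E m = 1 / p m)
    (hErec : ∀ i, i < m → E i = 1 + (1 - p i) * E (i + 1))
    (hX2m : X2 m = (2 - p m) / (p m) ^ 2)
    (hX2rec : ∀ i, i < m → X2 i = 1 + (1 - p i) * (2 * E (i + 1) + X2 (i + 1))) :
    X2 0 = 1 + (∑ i ∈ Finset.range (m - 1), ∏ j ∈ Finset.range (i + 1), (1 - p j))
      + 2 * (∑ i ∈ Finset.range m, E (i + 1) * ∏ j ∈ Finset.range (i + 1), (1 - p j))
      + ((2 - p m) / (p m) ^ 2) * ∏ i ∈ Finset.range m, (1 - p i) := by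
  rw [second_moment_aux p E X2 m hm hX2rec, hX2m]
end

section
/- Let m ≥ 1 and let n/k ≥ m+1. Among all probability vectors (p₀,...,p_m) ∈ [0,1]^m × (0,1] satisfying E₀ = 1 + Σ_{i=0}^{m-2} Π_{j=0}^{i}(1-p_j) + (1/p_m)Π_{i=0}^{m-1}(1-p_i) = n/k, the variance of the return time X to state 0 is minimized by p₀ = ... = p_{m-1} = 0 and p_m = 1/(n/k - m), and the minimum variance equals (n/k - m)(n/k - (m+1)). -/
/-- Expected hitting time of state 0 from state `m - j` of the age Markov chain,
defined by downward recursion: `EhitAux p m 0 = E m = 1/p m` and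
`EhitAux p m (j+1) = E (m-(j+1)) = 1 + (1 - p (m-(j+1))) * E (m-j)`. -/
noncomputable def EhitAux (p : ℕ → ℝ) (m : ℕ) : ℕ → ℝ
  | 0 => 1 / p m
  | j + 1 => 1 + (1 - p (m - (j + 1))) * EhitAux p m j

/-- `Ehit p m i` = expected hitting time of state 0 from state `i`
(for `i = 0`: expected first return time to 0). -/
noncomputable def Ehit (p : ℕ → ℝ) (m i : ℕ) : ℝ := EhitAux p m (m - i)

/-- Second moment of the hitting time of state 0 from state `m - j`:
`X2 m = (2 - p m)/p m ^ 2`, `X2 i = 1 + (1 - p i)(2 E (i+1) + X2 (i+1))`. -/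
noncomputable def X2Aux (p : ℕ → ℝ) (m : ℕ) : ℕ → ℝ
  | 0 => (2 - p m) / (p m) ^ 2
  | j + 1 => 1 + (1 - p (m - (j + 1))) * (2 * EhitAux p m j + X2Aux p m j)

/-- Variance of the first return time `X` to state 0: `Var[X] = E[X²] - E[X]²`. -/
noncomputable def VarX (p : ℕ → ℝ) (m : ℕ) : ℝ :=
  X2Aux p m m - (Ehit p m 0) ^ 2

lemma EhitAux_pos (p : ℕ → ℝ) (m : ℕ) (hp : ∀ j, j < m → 0 ≤ p j ∧ p j ≤ 1)
    (hpm : 0 < p m) : ∀ j, j ≤ m → 0 < EhitAux p m j := by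
  intro j
  induction j with
  | zero => intro _; simp [EhitAux]; positivity
  | succ j ih =>
    intro hj
    have hidx : m - (j + 1) < m := by omega
    have hq : p (m - (j+1)) ≤ 1 := (hp _ hidx).2
    have hprev := ih (by omega)
    simp only [EhitAux]
    nlinarith

lemma var_lb (p : ℕ → ℝ) (m : ℕ) (hp : ∀ j, j < m → 0 ≤ p j ∧ p j ≤ 1)
    (hpm : 0 < p m) (hpm1 : p m ≤ 1) :
    ∀ j, j ≤ m → (j : ℝ) + 1 ≤ EhitAux p m j →
      (EhitAux p m j - j) * (EhitAux p m j - j - 1) ≤ X2Aux p m j - (EhitAux p m j) ^ 2 := by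
  intro j
  induction j with
  | zero =>
    intro _ _
    simp only [EhitAux, X2Aux, Nat.cast_zero]
    have : (2 - p m) / p m ^ 2 - (1 / p m) ^ 2 = (1/p m - 0) * (1/p m - 0 - 1) := by
      field_simp; ring
    rw [this]
  | succ j ih =>
    intro hj hE
    have hidx : m - (j + 1) < m := by omega
    obtain ⟨hq0, hq1⟩ := hp _ hidx
    have hEpos : 0 < EhitAux p m j := EhitAux_pos p m hp hpm j (by omega)
    simp only [EhitAux, X2Aux, Nat.cast_succ] at hE ⊢
    set q : ℝ := 1 - p (m - (j + 1)) with hqdef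
    have hq0' : 0 ≤ q := by simp [hqdef]; linarith
    have hq1' : q ≤ 1 := by simp [hqdef]; linarith
    set E : ℝ := EhitAux p m j
    -- from hE : j + 1 + 1 ≤ 1 + q * E, we get q * E ≥ j + 1
    have hqE : (j : ℝ) + 1 ≤ q * E := by linarith
    have hE1 : (j : ℝ) + 1 ≤ E := by nlinarith
    have hIH := ih (by omega) hE1
    set X2 : ℝ := X2Aux p m j
    have key : (1 + q * E - (j+1)) * (1 + q * E - (j+1) - 1)
        ≤ q * ((E - j) * (E - j - 1)) + q * (1 - q) * E ^ 2 := by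
      have h1 : (0:ℝ) ≤ 2 * q * E ^ 2 - j * (j + 1) := by nlinarith
      nlinarith [mul_nonneg (sub_nonneg.2 hq1') h1]
    nlinarith

lemma pstar_eval (m : ℕ) (hm : 1 ≤ m) (A : ℝ) (hA : 1 ≤ A) :
    ∀ j, EhitAux (fun i => if i < m then 0 else 1 / A) m j = A + j ∧
      X2Aux (fun i => if i < m then 0 else 1 / A) m j = (A + j) ^ 2 + A ^ 2 - A := by
  have hA0 : A ≠ 0 := by linarith
  intro j
  induction j with
  | zero =>
    constructor
    · simp [EhitAux]
    · simp only [X2Aux, lt_irrefl, if_false, Nat.cast_zero, add_zero]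
      field_simp
      ring
  | succ j ih =>
    have hidx : m - (j + 1) < m := by omega
    obtain ⟨h1, h2⟩ := ih
    constructor
    · simp only [EhitAux, if_pos hidx, h1, Nat.cast_succ]; ring
    · simp only [X2Aux, if_pos hidx, h1, h2, Nat.cast_succ]; ring

/-- If `m ≥ 1` and `n/k ≥ m + 1`, among all selection probability vectors
`(p 0,...,p m) ∈ [0,1]^m × (0,1]` with expected return time `E 0 = n/k`, the
variance of the return time to state 0 is minimized by
`p 0 = ⋯ = p (m-1) = 0` and `p m = 1/(n/k - m)`, with minimum value
`(n/k - m)(n/k - (m+1))`. -/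
theorem optimal_markov_small_m (n k : ℝ) (hn : 0 < n) (hk : 0 < k)
    (m : ℕ) (hm : 1 ≤ m) (hnk : (m : ℝ) + 1 ≤ n / k) :
    (∀ p : ℕ → ℝ, (∀ j, j < m → 0 ≤ p j ∧ p j ≤ 1) → 0 < p m → p m ≤ 1 →
      Ehit p m 0 = n / k →
      (n / k - m) * (n / k - (m + 1)) ≤ VarX p m) ∧
    (let pstar : ℕ → ℝ := fun j => if j < m then 0 else 1 / (n / k - m);
      (∀ j, j < m → pstar j = 0) ∧ pstar m = 1 / (n / k - m) ∧
      0 < pstar m ∧ pstar m ≤ 1 ∧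
      Ehit pstar m 0 = n / k ∧
      VarX pstar m = (n / k - m) * (n / k - (m + 1))) := by
  set c : ℝ := n / k with hc
  have hA : (1:ℝ) ≤ c - m := by linarith
  constructor
  · intro p hp hpm hpm1 hE
    have hE' : EhitAux p m m = c := by
      simpa [Ehit] using hE
    have hlb := var_lb p m hp hpm hpm1 m le_rfl (by rw [hE']; linarith)
    rw [hE'] at hlb
    simp only [VarX, Ehit, Nat.sub_zero, hE']
    calc (c - m) * (c - (m + 1)) = (c - m) * (c - m - 1) := by ring
    _ ≤ X2Aux p m m - c ^ 2 := hlb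
  · intro pstar
    have hps : ∀ j, j < m → pstar j = 0 := fun j hj => if_pos hj
    have hpsm : pstar m = 1 / (c - m) := if_neg (lt_irrefl m)
    have hpos : 0 < pstar m := by rw [hpsm]; positivity
    have hle : pstar m ≤ 1 := by
      rw [hpsm]
      rw [div_le_one (by linarith)]
      linarith
    have heval := pstar_eval m hm (c - m) hA
    have hE0 : Ehit pstar m 0 = c := by
      simp only [Ehit, Nat.sub_zero]
      have := (heval m).1
      simp only [pstar] at *
      rw [this]; ring
    refine ⟨hps, hpsm, hpos, hle, hE0, ?_⟩
    simp only [VarX, hE0]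
    have := (heval m).2
    simp only [pstar] at *
    rw [this]; ring
end

section
/- Let m ≥ ⌊n/k⌋ with n/k > 1, and set i = ⌊n/k⌋, c = n/k - i. Among all (p₀,...,p_m) ∈ [0,1]^m × (0,1] with expected return time E₀ = n/k, the variance of the return time X to state 0 is minimized by p₀ = ... = p_{i-2} = 0, p_{i-1} = i + 1 - n/k, p_i = ... = p_m = 1, and the minimum variance is c(1-c). -/
private lemma int_mul_succ_nonneg (a : ℤ) : (0:ℝ) ≤ (a:ℝ) * ((a:ℝ) + 1) := by
  rcases le_or_gt 0 a with h | h
  · have h1 : (0:ℝ) ≤ (a:ℝ) := by exact_mod_cast h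
    nlinarith
  · have h1 : (a:ℝ) ≤ -1 := by exact_mod_cast (show a ≤ -1 by omega)
    nlinarith

private lemma int_mul_pred_nonneg (a : ℤ) : (0:ℝ) ≤ (a:ℝ) * ((a:ℝ) - 1) := by
  have := int_mul_succ_nonneg (a - 1)
  push_cast at this
  nlinarith

/-- Key inequality: second factorial moment around any integer `a` is nonnegative. -/
private lemma key_ineq (p : ℕ → ℝ) (m : ℕ) (hp : ∀ j, j < m → 0 ≤ p j ∧ p j ≤ 1)
    (hpm : 0 < p m) (hpm1 : p m ≤ 1) :
    ∀ j, j ≤ m → ∀ a : ℤ,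
      0 ≤ X2Aux p m j - (2 * (a:ℝ) + 1) * EhitAux p m j + (a:ℝ) * ((a:ℝ) + 1) := by
  intro j
  induction j with
  | zero =>
    intro _ a
    have hp2 : (0:ℝ) < (p m) ^ 2 := by positivity
    have hne : p m ≠ 0 := ne_of_gt hpm
    have key2 : 0 ≤ (a:ℝ) * ((a:ℝ) + 1) * (p m) ^ 2 - (2 * (a:ℝ) + 2) * p m + 2 := by
      rcases le_or_gt 1 a with h | h
      · have h1 : (1:ℝ) ≤ (a:ℝ) := by exact_mod_cast h
        nlinarith [mul_nonneg (show (0:ℝ) ≤ (a:ℝ) + 1 by linarith)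
          (sq_nonneg ((a:ℝ) * p m - 1))]
      · have h0 : (a:ℝ) ≤ 0 := by exact_mod_cast Int.lt_add_one_iff.mp h
        nlinarith [mul_nonneg (int_mul_succ_nonneg a) (sq_nonneg (p m)),
          mul_nonneg (show (0:ℝ) ≤ -(a:ℝ) by linarith) hpm.le]
    have heq : X2Aux p m 0 - (2 * (a:ℝ) + 1) * EhitAux p m 0 + (a:ℝ) * ((a:ℝ) + 1)
        = ((a:ℝ) * ((a:ℝ) + 1) * (p m) ^ 2 - (2 * (a:ℝ) + 2) * p m + 2) / (p m) ^ 2 := by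
      simp only [X2Aux, EhitAux]
      field_simp
      ring
    rw [heq]
    exact div_nonneg key2 hp2.le
  | succ j ih =>
    intro hj a
    obtain ⟨hq0, hq1⟩ := hp (m - (j + 1)) (by omega)
    have hprev := ih (by omega) (a - 1)
    push_cast at hprev
    simp only [X2Aux, EhitAux]
    nlinarith [mul_nonneg (show (0:ℝ) ≤ 1 - p (m - (j+1)) by linarith) hprev,
      mul_nonneg hq0 (int_mul_pred_nonneg a)]

/-- On the top plateau where `p = 1`, hitting time is deterministically 1. -/
private lemma auxA (p : ℕ → ℝ) (m i : ℕ) (him : i ≤ m) (hp1 : ∀ s, i ≤ s → p s = 1) :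
    ∀ d, d ≤ m - i → EhitAux p m d = 1 ∧ X2Aux p m d = 1 := by
  intro d
  induction d with
  | zero =>
    intro _
    have h1 : p m = 1 := hp1 m him
    constructor <;> simp [EhitAux, X2Aux, h1] <;> norm_num
  | succ d ih =>
    intro hd
    have h1 := ih (by omega)
    have h2 : p (m - (d + 1)) = 1 := hp1 _ (by omega)
    constructor <;> simp [EhitAux, X2Aux, h2, h1.1, h1.2]

private lemma auxB (p : ℕ → ℝ) (t e : ℕ) (c : ℝ)
    (hp1 : ∀ s, t + 1 ≤ s → p s = 1) (hpt : p t = 1 - c)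
    (hp0 : ∀ s, s < t → p s = 0) :
    ∀ d, d ≤ t →
      EhitAux p (t + 1 + e) (e + 1 + d) = ((d:ℝ) + 1) + c ∧
      X2Aux p (t + 1 + e) (e + 1 + d) = ((d:ℝ) + 1) ^ 2 + (2 * ((d:ℝ) + 1) + 1) * c := by
  have hA := auxA p (t + 1 + e) (t + 1) (by omega) hp1
  intro d
  induction d with
  | zero =>
    intro _
    have hs : t + 1 + e - (e + 1) = t := by omega
    have h1 := hA e (by omega)
    rw [show e + 1 + 0 = e + 1 from rfl]
    constructor
    · simp [EhitAux, hs, hpt, h1.1]; try push_cast; try ring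
    · simp [X2Aux, hs, hpt, h1.1, h1.2]; try push_cast; try ring
  | succ d ih =>
    intro hd
    have h1 := ih (by omega)
    rw [show e + 1 + (d + 1) = (e + 1 + d) + 1 from by omega]
    have hs : t + 1 + e - (e + 1 + d + 1) = t - (d + 1) := by omega
    have hp' : p (t - (d + 1)) = 0 := hp0 _ (by omega)
    constructor
    · simp [EhitAux, hs, hp', h1.1]; try push_cast; try ring
    · simp [X2Aux, hs, hp', h1.1, h1.2]; try push_cast; try ring

/-- If `m ≥ ⌊n/k⌋` and `n/k > 1`, setting `i = ⌊n/k⌋` and `c = n/k - i`, among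
all `(p 0,...,p m) ∈ [0,1]^m × (0,1]` with expected return time `E 0 = n/k`,
the variance of the return time to state 0 is minimized by
`p 0 = ⋯ = p (i-2) = 0`, `p (i-1) = i + 1 - n/k`, `p i = ⋯ = p m = 1`, with
minimum value `c(1-c)`. -/
theorem optimal_markov_large_m (n k : ℝ) (hn : 0 < n) (hk : 0 < k)
    (hnk : 1 < n / k) (m : ℕ) (hm : ⌊n / k⌋₊ ≤ m) :
    (∀ p : ℕ → ℝ, (∀ j, j < m → 0 ≤ p j ∧ p j ≤ 1) → 0 < p m → p m ≤ 1 →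
      Ehit p m 0 = n / k →
      (n / k - ⌊n / k⌋₊) * (1 - (n / k - ⌊n / k⌋₊)) ≤ VarX p m) ∧
    (let i := ⌊n / k⌋₊;
     let pstar : ℕ → ℝ := fun j =>
       if j + 2 ≤ i then 0 else if j + 1 = i then (i : ℝ) + 1 - n / k else 1;
      (∀ j, j + 2 ≤ i → pstar j = 0) ∧
      pstar (i - 1) = (i : ℝ) + 1 - n / k ∧
      (∀ j, i ≤ j → pstar j = 1) ∧
      Ehit pstar m 0 = n / k ∧
      VarX pstar m = (n / k - i) * (1 - (n / k - i))) := by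
  have hμ : (0:ℝ) < n / k := by positivity
  have hi1 : 1 ≤ ⌊n / k⌋₊ := Nat.le_floor (by push_cast; linarith)
  have hfl : ((⌊n / k⌋₊ : ℕ) : ℝ) ≤ n / k := Nat.floor_le hμ.le
  have hfu : n / k < (⌊n / k⌋₊ : ℝ) + 1 := Nat.lt_floor_add_one _
  constructor
  · intro p hp hpm hpm1 hE
    have hE' : EhitAux p m m = n / k := by
      simpa [Ehit] using hE
    have hX2 := key_ineq p m hp hpm hpm1 m le_rfl (⌊n / k⌋₊ : ℤ)
    push_cast at hX2
    rw [hE'] at hX2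
    have hV : VarX p m = X2Aux p m m - (n / k) ^ 2 := by
      simp [VarX, hE]
    rw [hV]
    nlinarith [hX2]
  · intro i pstar
    have hps1 : ∀ s, i ≤ s → pstar s = 1 := by
      intro s hs
      simp only [pstar]
      rw [if_neg (by omega), if_neg (by omega)]
    have hps0 : ∀ s, s + 2 ≤ i → pstar s = 0 := by
      intro s hs
      simp only [pstar]
      rw [if_pos hs]
    have hpst : pstar (i - 1) = (i : ℝ) + 1 - n / k := by
      simp only [pstar]
      rw [if_neg (by omega), if_pos (by omega)]
    refine ⟨hps0, hpst, hps1, ?_, ?_⟩ <;>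
    · have hB := auxB pstar (i - 1) (m - i) (n / k - (i:ℝ))
        (by intro s hs; exact hps1 s (by omega))
        (by rw [hpst]; ring)
        (by intro s hs; exact hps0 s (by omega))
        (i - 1) le_rfl
      rw [show i - 1 + 1 + (m - i) = m from by omega,
        show m - i + 1 + (i - 1) = m from by omega] at hB
      have hic : ((i - 1 : ℕ) : ℝ) = (i:ℝ) - 1 := by
        push_cast [Nat.cast_sub (show 1 ≤ i from hi1)]; try push_cast; try ring
      rw [hic] at hB
      first
      | · -- Ehit
          simp only [Ehit, Nat.sub_zero]
          rw [hB.1]; try push_cast; try ring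
      | · -- VarX
          simp only [VarX, Ehit, Nat.sub_zero]
          rw [hB.1, hB.2]; try push_cast; try ring
end

section
/- Maximize the linear objective 2 Σ_{i=0}^{m-2} (m-1-i) y_i subject to 1 + y₀ + y₁ + ... + y_{m-1} = n/k and 0 ≤ y_{m-1} ≤ y_{m-2} ≤ ... ≤ y₀ ≤ 1, where ⌊n/k⌋ ≤ m and n/k > 1. The maximum is attained by y₀ = ... = y_{i-2} = 1, y_{i-1} = n/k - i, y_i = ... = y_{m-1} = 0, where i = ⌊n/k⌋. -/
open Finset

lemma swap_sum (f : ℕ → ℝ) : ∀ N : ℕ,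
    ∑ t ∈ Finset.range N, ((N:ℝ) - t) * f t
      = ∑ s ∈ Finset.range N, ∑ t ∈ Finset.range (s+1), f t := by
  intro N
  induction N with
  | zero => simp
  | succ N ih =>
    rw [Finset.sum_range_succ, Finset.sum_range_succ, ← ih, Finset.sum_range_succ (f := f)]
    push_cast
    have h : ∑ t ∈ Finset.range N, ((N:ℝ) + 1 - t) * f t
        = ∑ t ∈ Finset.range N, (((N:ℝ) - t) * f t + f t) :=
      Finset.sum_congr rfl fun t _ => by ring
    rw [h, Finset.sum_add_distrib]
    ring

/-- The linear program from the optimal Markov policy proof: maximize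
`2 Σ_{t=0}^{m-2} (m-1-t) y_t` subject to `1 + y_0 + ⋯ + y_{m-1} = n/k` and
`0 ≤ y_{m-1} ≤ ⋯ ≤ y_0 ≤ 1`, where `⌊n/k⌋ ≤ m` and `n/k > 1`. The maximum is
attained at `y_0 = ⋯ = y_{i-2} = 1`, `y_{i-1} = n/k - i`, `y_i = ⋯ = y_{m-1} = 0`,
where `i = ⌊n/k⌋`. -/
theorem lp_greedy_optimal (n k : ℝ) (hn : 0 < n) (hk : 0 < k)
    (hnk : 1 < n / k) (m : ℕ) (hm : ⌊n / k⌋₊ ≤ m) :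
    let i := ⌊n / k⌋₊
    let ystar : ℕ → ℝ := fun t =>
      if t + 2 ≤ i then 1 else if t + 1 = i then n / k - i else 0
    -- `ystar` is feasible:
    (1 + ∑ t ∈ Finset.range m, ystar t = n / k) ∧
    (∀ t, t + 1 < m → ystar (t + 1) ≤ ystar t) ∧
    0 ≤ ystar (m - 1) ∧ ystar 0 ≤ 1 ∧
    -- and optimal:
    (∀ y : ℕ → ℝ,
      (1 + ∑ t ∈ Finset.range m, y t = n / k) →
      (∀ t, t + 1 < m → y (t + 1) ≤ y t) →
      0 ≤ y (m - 1) → y 0 ≤ 1 →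
      2 * ∑ t ∈ Finset.range (m - 1), ((m : ℝ) - 1 - t) * y t ≤
      2 * ∑ t ∈ Finset.range (m - 1), ((m : ℝ) - 1 - t) * ystar t) := by
  intro i ystar
  have hnk0 : (0:ℝ) ≤ n / k := by positivity
  have hile : (i:ℝ) ≤ n / k := Nat.floor_le hnk0
  have hilt : n / k < i + 1 := Nat.lt_floor_add_one _
  have hi1 : 1 ≤ i := Nat.le_floor (by push_cast; linarith)
  have hm1 : 1 ≤ m := le_trans hi1 hm
  have hsum : ∀ N : ℕ, ∑ t ∈ Finset.range N, ystar t
      = if N + 1 ≤ i then (N:ℝ) else n/k - 1 := by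
    intro N
    induction N with
    | zero => simp [hi1]
    | succ N ih =>
      rw [Finset.sum_range_succ, ih]
      by_cases h1 : N + 2 ≤ i
      · rw [if_pos (by omega : N + 1 ≤ i), if_pos (by omega : N + 1 + 1 ≤ i)]
        simp only [ystar, if_pos h1]
        push_cast; ring
      · by_cases h2 : N + 1 = i
        · rw [if_pos (by omega : N + 1 ≤ i), if_neg (by omega : ¬ (N + 1 + 1 ≤ i))]
          simp only [ystar, if_neg h1, if_pos h2]
          have hcast : (i:ℝ) = (N:ℝ) + 1 := by rw [← h2]; push_cast; ring
          linarith
        · rw [if_neg (by omega : ¬ (N + 1 ≤ i)), if_neg (by omega : ¬ (N + 1 + 1 ≤ i))]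
          simp only [ystar, if_neg h1, if_neg h2]
          ring
  refine ⟨?_, ?_, ?_, ?_, ?_⟩
  · rw [hsum m, if_neg (by omega)]; ring
  · intro t ht
    simp only [ystar]
    split_ifs <;> first | (exfalso; omega) | linarith
  · simp only [ystar]
    split_ifs <;> linarith
  · simp only [ystar]
    split_ifs <;> linarith
  · intro y hy hmono hylast hy1
    have hanti : ∀ d a, a + d < m → y (a + d) ≤ y a := by
      intro d
      induction d with
      | zero => intro a _; simp
      | succ d ih =>
        intro a h
        calc y (a + (d+1)) = y (a + d + 1) := by ring_nf
          _ ≤ y (a + d) := hmono _ (by omega)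
          _ ≤ y a := ih a (by omega)
    have hnn : ∀ t, t < m → 0 ≤ y t := by
      intro t ht
      have h := hanti (m - 1 - t) t (by omega)
      rw [show t + (m - 1 - t) = m - 1 from by omega] at h
      linarith
    have hle1 : ∀ t, t < m → y t ≤ 1 := by
      intro t ht
      have h := hanti t 0 (by omega)
      simpa using le_trans h hy1
    have hSy : ∀ N, N ≤ m → ∑ t ∈ Finset.range N, y t ≤ min (N:ℝ) (n/k - 1) := by
      intro N hN
      apply le_min
      · calc ∑ t ∈ Finset.range N, y t
            ≤ ∑ _t ∈ Finset.range N, (1:ℝ) :=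
              Finset.sum_le_sum (fun t ht => hle1 t (by
                have := Finset.mem_range.1 ht; omega))
          _ = N := by simp
      · have h : ∑ t ∈ Finset.range N, y t ≤ ∑ t ∈ Finset.range m, y t :=
          Finset.sum_le_sum_of_subset_of_nonneg (Finset.range_subset_range.2 hN)
            (fun t ht _ => hnn t (Finset.mem_range.1 ht))
        linarith
    have key : ∀ s ∈ Finset.range (m-1),
        ∑ t ∈ Finset.range (s+1), y t ≤ ∑ t ∈ Finset.range (s+1), ystar t := by
      intro s hs
      have hs' := Finset.mem_range.1 hs
      rw [hsum (s+1)]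
      refine le_trans (hSy (s+1) (by omega)) ?_
      by_cases h : s + 1 + 1 ≤ i
      · rw [if_pos h]; exact min_le_left _ _
      · rw [if_neg h]; exact min_le_right _ _
    have hm1' : ((m - 1 : ℕ) : ℝ) = (m:ℝ) - 1 := by
      rw [Nat.cast_sub hm1]; norm_num
    calc 2 * ∑ t ∈ Finset.range (m-1), ((m:ℝ) - 1 - t) * y t
        = 2 * ∑ t ∈ Finset.range (m-1), (((m - 1 : ℕ) : ℝ) - (t:ℝ)) * y t := by rw [hm1']
      _ = 2 * ∑ s ∈ Finset.range (m-1), ∑ t ∈ Finset.range (s+1), y t := by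
          rw [swap_sum]
      _ ≤ 2 * ∑ s ∈ Finset.range (m-1), ∑ t ∈ Finset.range (s+1), ystar t := by
          have := Finset.sum_le_sum key
          linarith
      _ = 2 * ∑ t ∈ Finset.range (m-1), (((m - 1 : ℕ) : ℝ) - (t:ℝ)) * ystar t := by
          rw [swap_sum]
      _ = 2 * ∑ t ∈ Finset.range (m-1), ((m:ℝ) - 1 - t) * ystar t := by rw [hm1']
end
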